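/- arXiv:2604.02858 — 4 statements merged into one kernel-verified Lean document; each statement's English description precedes it below -/
import Mathlib

section
/- Let f : ℝⁿ → ℝ be convex and continuously differentiable with L-Lipschitz gradient. Then for all x, y, ‖∇f(x) - ∇f(y)‖² ≤ 2L · D_f(x,y), where D_f(x,y) = f(x) - f(y) - ⟨∇f(y), x-y⟩ is the Bregman divergence. -/
/-!
Put `g = ∇f x - ∇f y` and `z = x - g / L`. Convexity makes the Bregman divergence
nonnegative, and the Lipschitz gradient bounds it above by the quadratic `L/2 ‖z - x‖²`
(the descent lemma). The three-point identity
`D(x,y) = D(z,y) - D(z,x) + ⟪g, x - z⟫` then gives `D(x,y) ≥ ‖g‖² / L - ‖g‖² / (2L)`.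
-/

open scoped RealInnerProductSpace
open Set AffineMap

section BregmanDiv

variable {E : Type*} [NormedAddCommGroup E] [InnerProductSpace ℝ E]

def bregmanDiv (f : E → ℝ) (f' : E → E) (x y : E) : ℝ :=
  f x - f y - ⟪f' y, x - y⟫

theorem bregmanDiv_eq_sub_add_inner (f : E → ℝ) (f' : E → E) (x y z : E) :
    bregmanDiv f f' x y =
      bregmanDiv f f' z y - bregmanDiv f f' z x + ⟪f' x - f' y, x - z⟫ := by
  simp only [bregmanDiv, inner_sub_left, inner_sub_right]
  ring

variable [CompleteSpace E] {f : E → ℝ} {f' : E → E}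

theorem HasGradientAt.hasDerivAt_comp_lineMap {g a b : E} {t : ℝ}
    (hf : HasGradientAt f g (lineMap a b t)) :
    HasDerivAt (fun s : ℝ => f (lineMap a b s)) ⟪g, b - a⟫ t := by
  have := (hasGradientAt_iff_hasFDerivAt.1 hf).comp_hasDerivAt t hasDerivAt_lineMap
  rwa [InnerProductSpace.toDual_apply_apply] at this

theorem ConvexOn.bregmanDiv_nonneg (hconv : ConvexOn ℝ univ f) {x y : E}
    (hf : HasGradientAt f (f' y) y) : 0 ≤ bregmanDiv f f' x y := by
  have hline : ConvexOn ℝ univ (fun s : ℝ => f (lineMap y x s)) := by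
    have := hconv.comp_affineMap (lineMap y x)
    rwa [preimage_univ] at this
  have hderiv : HasDerivAt (fun s : ℝ => f (lineMap y x s)) ⟪f' y, x - y⟫ 0 :=
    HasGradientAt.hasDerivAt_comp_lineMap (by simpa using hf)
  have := hline.le_slope_of_hasDerivAt (mem_univ 0) (mem_univ 1) zero_lt_one hderiv
  simp only [slope_def_field, lineMap_apply_zero, lineMap_apply_one, sub_zero, div_one] at this
  unfold bregmanDiv
  linarith

theorem bregmanDiv_le_of_lipschitzWith {K : NNReal} (hgrad : ∀ x, HasGradientAt f (f' x) x)
    (hlip : LipschitzWith K f') (x y : E) :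
    bregmanDiv f f' x y ≤ K / 2 * ‖x - y‖ ^ 2 := by
  set φ : ℝ → ℝ :=
    fun s => f (lineMap y x s) - s * ⟪f' y, x - y⟫ - K / 2 * s ^ 2 * ‖x - y‖ ^ 2
  set φ' : ℝ → ℝ := fun s => ⟪f' (lineMap y x s) - f' y, x - y⟫ - K * s * ‖x - y‖ ^ 2
  have hφ : ∀ s, HasDerivAt φ (φ' s) s := by
    intro s
    have := ((hgrad (lineMap y x s)).hasDerivAt_comp_lineMap.sub
      ((hasDerivAt_id' s).mul_const ⟪f' y, x - y⟫)).sub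
      ((((hasDerivAt_id' s).pow 2).const_mul (K / 2 : ℝ)).mul_const (‖x - y‖ ^ 2))
    refine this.congr_deriv ?_
    simp only [φ', inner_sub_left]
    push_cast
    ring
  obtain ⟨c, ⟨hc0, -⟩, hc⟩ := exists_hasDerivAt_eq_slope φ φ' zero_lt_one
    (HasDerivAt.continuousOn fun s _ => hφ s) fun s _ => hφ s
  have hφ'c : φ' c ≤ 0 := by
    have hdist : ‖lineMap y x c - y‖ = c * ‖x - y‖ := by
      rw [← vsub_eq_sub, lineMap_vsub_left, vsub_eq_sub, norm_smul, Real.norm_of_nonneg hc0.le]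
    have hgrad_dist : ‖f' (lineMap y x c) - f' y‖ ≤ K * (c * ‖x - y‖) := by
      rw [← hdist, ← dist_eq_norm, ← dist_eq_norm]
      exact hlip.dist_le_mul _ _
    have := real_inner_le_norm (f' (lineMap y x c) - f' y) (x - y)
    have := mul_le_mul_of_nonneg_right hgrad_dist (norm_nonneg (x - y))
    simp only [φ']
    linarith
  simp only [φ, lineMap_apply_zero, lineMap_apply_one, zero_mul, one_mul, one_pow,
    zero_pow two_ne_zero, mul_zero, sub_zero, div_one] at hc
  unfold bregmanDiv
  linarith

theorem sq_norm_sub_le_two_mul_bregmanDiv {K : NNReal} (hconv : ConvexOn ℝ univ f)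
    (hgrad : ∀ x, HasGradientAt f (f' x) x) (hlip : LipschitzWith K f') (x y : E) :
    ‖f' x - f' y‖ ^ 2 ≤ 2 * K * bregmanDiv f f' x y := by
  rcases eq_or_ne K 0 with rfl | hK
  · have hxy : f' x = f' y := by simpa using hlip.dist_le_mul x y
    simp [hxy]
  set g := f' x - f' y
  have hKpos : (0 : ℝ) < K := NNReal.coe_pos.2 (pos_iff_ne_zero.2 hK)
  set z := x - (K : ℝ)⁻¹ • g
  have hxz : x - z = (K : ℝ)⁻¹ • g := sub_sub_cancel x _
  have hzx : bregmanDiv f f' z x ≤ (K : ℝ)⁻¹ / 2 * ‖g‖ ^ 2 := by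
    have := bregmanDiv_le_of_lipschitzWith hgrad hlip z x
    rw [← norm_neg, neg_sub, hxz, norm_smul, Real.norm_of_nonneg (inv_nonneg.2 hKpos.le)] at this
    convert this using 1
    field_simp
  have hD : (K : ℝ)⁻¹ / 2 * ‖g‖ ^ 2 ≤ bregmanDiv f f' x y := by
    rw [bregmanDiv_eq_sub_add_inner f f' x y z, hxz, real_inner_smul_right,
      real_inner_self_eq_norm_sq]
    linarith [hconv.bregmanDiv_nonneg (x := z) (hgrad y)]
  calc ‖g‖ ^ 2 = 2 * K * ((K : ℝ)⁻¹ / 2 * ‖g‖ ^ 2) := by field_simp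
    _ ≤ 2 * K * bregmanDiv f f' x y := by gcongr

end BregmanDiv

theorem grad_sq_le_two_L_bregman_general
    (n : ℕ) (f : EuclideanSpace ℝ (Fin n) → ℝ)
    (f' : EuclideanSpace ℝ (Fin n) → EuclideanSpace ℝ (Fin n)) (L : ℝ)
    (hconv : ConvexOn ℝ Set.univ f)
    (hgrad : ∀ x, HasGradientAt f (f' x) x)
    (hlip : LipschitzWith (Real.toNNReal L) f') :
    ∀ x y, ‖f' x - f' y‖ ^ 2 ≤ 2 * L * (f x - f y - ⟪f' y, x - y⟫) := by
  intro x y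
  have key := sq_norm_sub_le_two_mul_bregmanDiv hconv hgrad hlip x y
  rcases le_or_gt 0 L with hL | hL
  · rwa [Real.coe_toNNReal L hL] at key
  · have hD := bregmanDiv_le_of_lipschitzWith hgrad hlip x y
    rw [Real.toNNReal_of_nonpos hL.le] at key hD
    simp only [NNReal.coe_zero, mul_zero, zero_mul, zero_div] at key hD
    unfold bregmanDiv at hD
    linarith [mul_nonneg_of_nonpos_of_nonpos hL.le hD]

/-- For a convex, continuously differentiable `f : ℝⁿ → ℝ` with
L-Lipschitz gradient, `‖∇f(x) - ∇f(y)‖² ≤ 2L · D_f(x,y)` where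
`D_f(x,y) = f x - f y - ⟪∇f y, x - y⟫`. -/
theorem grad_sq_le_two_L_bregman
    (n : ℕ) (f : EuclideanSpace ℝ (Fin n) → ℝ)
    (f' : EuclideanSpace ℝ (Fin n) → EuclideanSpace ℝ (Fin n)) (L : ℝ)
    (hconv : ConvexOn ℝ Set.univ f)
    (hgrad : ∀ x, HasGradientAt f (f' x) x)
    (hcont : Continuous f')
    (hlip : LipschitzWith (Real.toNNReal L) f') :
    ∀ x y, ‖f' x - f' y‖ ^ 2 ≤ 2 * L * (f x - f y - ⟪f' y, x - y⟫) :=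
  grad_sq_le_two_L_bregman_general n f f' L hconv hgrad hlip
end

section
/- Let g₁,…,g_m ∈ ℝᵈ with Σ_{j=1}^m g_j = 0, and let π be a uniformly random permutation of {1,…,m}. Then for every ℓ ∈ {0,…,m}, E[‖Σ_{p=0}^{ℓ-1} g_{π(p)}‖²] ≤ (m/2) · (1/m) Σ_{j=1}^m ‖g_j‖², i.e., the expected squared norm of any partial sum of a random permutation of vectors summing to zero is at most (1/2) Σ_j ‖g_j‖². -/
/-!
Since the `g j` sum to zero, the partial sum over a set `s` of positions is minus the sum over
`sᶜ`, so `‖∑ p ∈ s, g (π p)‖² = -∑ p ∈ s, ∑ q ∈ sᶜ, ⟪g (π p), g (π q)⟫`. The permutation group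
acts 2-transitively, so summing over `π` gives every pair of distinct positions the same weight,
and a count of pairs yields `∑ π, ⟪g (π p), g (π q)⟫ = -(m - 2)! ∑ j, ‖g j‖²` for `p ≠ q`.
Hence the average of `‖∑ p ∈ s, g (π p)‖²` is `#s (m - #s) / (m (m - 1)) ∑ j, ‖g j‖²`, and
`2 #s (m - #s) ≤ m (m - 1)`.
-/

open Finset
open scoped Nat RealInnerProductSpace

section

variable {ι : Type*} [Fintype ι] [DecidableEq ι]

theorem norm_sq_sum_eq_neg_sum_inner_compl {E : Type*} [NormedAddCommGroup E]
    [InnerProductSpace ℝ E] {v : ι → E} (hv : ∑ i, v i = 0) (s : Finset ι) :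
    ‖∑ i ∈ s, v i‖ ^ 2 = -∑ i ∈ s, ∑ j ∈ sᶜ, ⟪v i, v j⟫ := by
  have hcompl : ∑ j ∈ sᶜ, v j = -∑ i ∈ s, v i :=
    eq_neg_of_add_eq_zero_right (by rw [sum_add_sum_compl, hv])
  simp_rw [← inner_sum, ← sum_inner, hcompl, inner_neg_right, neg_neg,
    real_inner_self_eq_norm_sq]

namespace Equiv.Perm

theorem sum_apply_apply_eq_of_ne {M : Type*} [AddCommMonoid M] (F : ι → ι → M)
    {p q p' q' : ι} (hpq : p ≠ q) (hpq' : p' ≠ q') :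
    ∑ σ : Perm ι, F (σ p) (σ q) = ∑ σ : Perm ι, F (σ p') (σ q') := by
  obtain ⟨τ, hτ⟩ := exists_extending_pair ![p, q] ![p', q']
    (injective_pair_iff_ne.mpr hpq) (injective_pair_iff_ne.mpr hpq')
  rw [← Equiv.sum_comp (Equiv.mulRight τ)]
  simpa using congrArg₂ (fun a b => ∑ σ : Perm ι, F (σ a) (σ b)) (hτ 0) (hτ 1)

theorem sum_apply_apply_of_ne {R : Type*} [Field R] [CharZero R] (F : ι → ι → R) {p q : ι}
    (hpq : p ≠ q) :
    ∑ σ : Perm ι, F (σ p) (σ q) =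
      (Fintype.card ι - 2)! * (∑ i, ∑ j, F i j - ∑ i, F i i) := by
  set V : ι → ι → R := fun a b => ∑ σ : Perm ι, F (σ a) (σ b)
  obtain ⟨k, hk⟩ : ∃ k, Fintype.card ι = k + 2 :=
    ⟨Fintype.card ι - 2, by have := Fintype.one_lt_card_iff.mpr ⟨p, q, hpq⟩; omega⟩
  have hall : ∑ a, ∑ b, V a b = (k + 2)! * ∑ i, ∑ j, F i j := by
    have hσ (σ : Perm ι) : ∑ a, ∑ b, F (σ a) (σ b) = ∑ i, ∑ j, F i j := by
      rw [Equiv.sum_comp σ (fun i => ∑ b, F i (σ b))]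
      simp_rw [Equiv.sum_comp σ (F _)]
    calc ∑ a, ∑ b, V a b = ∑ a, ∑ σ : Perm ι, ∑ b, F (σ a) (σ b) :=
          sum_congr rfl fun a _ => sum_comm
      _ = ∑ σ : Perm ι, ∑ a, ∑ b, F (σ a) (σ b) := sum_comm
      _ = _ := by simp [hσ, Fintype.card_perm, hk]
  have hdiag : ∑ a, V a a = (k + 2)! * ∑ i, F i i := by
    rw [sum_comm]
    simp_rw [Equiv.sum_comp _ (fun i => F i i)]
    simp [Fintype.card_perm, hk]
  have hrow (a : ι) : ∑ b, V a b = V a a + (k + 1) * V p q := by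
    rw [← add_sum_erase _ _ (mem_univ a), sum_congr rfl fun b hb =>
      sum_apply_apply_eq_of_ne F (ne_of_mem_erase hb).symm hpq, sum_const,
      card_erase_of_mem (mem_univ a), Finset.card_univ, hk, nsmul_eq_mul]
    push_cast
    ring
  have hcount : ∑ a, ∑ b, V a b = ∑ a, V a a + (k + 2) * (k + 1) * V p q := by
    simp only [hrow, sum_add_distrib, sum_const, Finset.card_univ, hk, nsmul_eq_mul]
    push_cast
    ring
  have hfact : ((k + 2)! : R) = (k + 2) * (k + 1) * k ! := by
    push_cast [Nat.factorial_succ]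
    ring
  rw [hk, Nat.add_sub_cancel]
  rw [hfact] at hall hdiag
  apply mul_left_cancel₀ (show ((k + 2) * (k + 1) : R) ≠ 0 by norm_cast)
  linear_combination hall - hdiag - hcount

variable {E : Type*} [NormedAddCommGroup E] [InnerProductSpace ℝ E] {g : ι → E}

theorem sum_inner_apply_of_ne (hg : ∑ j, g j = 0) {p q : ι} (hpq : p ≠ q) :
    ∑ σ : Perm ι, ⟪g (σ p), g (σ q)⟫ = -((Fintype.card ι - 2)! * ∑ j, ‖g j‖ ^ 2) := by
  rw [sum_apply_apply_of_ne (fun i j => ⟪g i, g j⟫) hpq]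
  simp_rw [← inner_sum, ← sum_inner, hg, inner_zero_left, real_inner_self_eq_norm_sq]
  ring

theorem sum_norm_sq_sum_apply (hg : ∑ j, g j = 0) (s : Finset ι) :
    ∑ σ : Perm ι, ‖∑ p ∈ s, g (σ p)‖ ^ 2 =
      #s * #sᶜ * (Fintype.card ι - 2)! * ∑ j, ‖g j‖ ^ 2 := by
  have hσ (σ : Perm ι) : ∑ i, g (σ i) = 0 := (Equiv.sum_comp σ g).trans hg
  calc ∑ σ : Perm ι, ‖∑ p ∈ s, g (σ p)‖ ^ 2
      = ∑ p ∈ s, ∑ q ∈ sᶜ, -∑ σ : Perm ι, ⟪g (σ p), g (σ q)⟫ := by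
        simp_rw [norm_sq_sum_eq_neg_sum_inner_compl (hσ _), sum_neg_distrib]
        rw [sum_comm]
        exact congrArg _ (sum_congr rfl fun p _ => sum_comm)
    _ = ∑ p ∈ s, ∑ q ∈ sᶜ, (Fintype.card ι - 2)! * ∑ j, ‖g j‖ ^ 2 := by
        refine sum_congr rfl fun p hp => sum_congr rfl fun q hq => ?_
        rw [sum_inner_apply_of_ne hg (ne_of_mem_of_not_mem hp (mem_compl.mp hq)), neg_neg]
    _ = _ := by
        simp only [sum_const, nsmul_eq_mul]
        ring

end Equiv.Perm

end

theorem two_mul_mul_mul_factorial_sub_two_le (a b : ℕ) :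
    2 * a * b * (a + b - 2)! ≤ (a + b)! := by
  rcases Nat.eq_zero_or_pos a with rfl | ha
  · simp
  rcases Nat.eq_zero_or_pos b with rfl | hb
  · simp
  obtain ⟨k, hk⟩ : ∃ k, a + b = k + 2 := ⟨a + b - 2, by omega⟩
  rw [hk, Nat.add_sub_cancel, Nat.factorial_succ, Nat.factorial_succ, ← mul_assoc]
  refine Nat.mul_le_mul_right _ ?_
  nlinarith [Nat.mul_le_mul ha hb]

theorem random_reshuffling_partial_sum_bound_general
    (m d : ℕ) (g : Fin m → EuclideanSpace ℝ (Fin d))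
    (hG : ∑ j, g j = 0) (ℓ : ℕ) :
    (1 / (Nat.factorial m : ℝ)) *
        ∑ π : Equiv.Perm (Fin m),
          ‖∑ p ∈ Finset.univ.filter (fun p : Fin m => (p : ℕ) < ℓ), g (π p)‖ ^ 2
      ≤ ((m : ℝ) / 2) * ((1 / (m : ℝ)) * ∑ j, ‖g j‖ ^ 2) := by
  obtain rfl | hm := m.eq_zero_or_pos
  · simp
  set s := Finset.univ.filter (fun p : Fin m => (p : ℕ) < ℓ)
  have hcount : (2 * #s * #sᶜ * (m - 2)! : ℝ) ≤ m ! := by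
    have := two_mul_mul_mul_factorial_sub_two_le #s #sᶜ
    rw [card_add_card_compl, Fintype.card_fin] at this
    exact_mod_cast this
  rw [Equiv.Perm.sum_norm_sq_sum_apply hG s, Fintype.card_fin]
  calc 1 / (m ! : ℝ) * (#s * #sᶜ * (m - 2)! * ∑ j, ‖g j‖ ^ 2)
      = (2 * #s * #sᶜ * (m - 2)! : ℝ) / m ! * ((∑ j, ‖g j‖ ^ 2) / 2) := by ring
    _ ≤ 1 * ((∑ j, ‖g j‖ ^ 2) / 2) := by
        gcongr
        exact div_le_one_of_le₀ hcount (by positivity)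
    _ = (m / 2) * (1 / m * ∑ j, ‖g j‖ ^ 2) := by field_simp

/-- if `g₁,…,g_m` sum to zero, then for every `ℓ ∈ {0,…,m}` the
expected squared norm (over a uniformly random permutation `π`) of the partial
sum `Σ_{p=0}^{ℓ-1} g_{π(p)}` is at most `(m/2)·(1/m)Σ_j ‖g_j‖² = (1/2)Σ_j ‖g_j‖²`. -/
theorem random_reshuffling_partial_sum_bound
    (m d : ℕ) (g : Fin m → EuclideanSpace ℝ (Fin d))
    (hG : ∑ j, g j = 0) (ℓ : ℕ) (hℓ : ℓ ≤ m) :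
    (1 / (Nat.factorial m : ℝ)) *
        ∑ π : Equiv.Perm (Fin m),
          ‖∑ p ∈ Finset.univ.filter (fun p : Fin m => (p : ℕ) < ℓ), g (π p)‖ ^ 2
      ≤ ((m : ℝ) / 2) * ((1 / (m : ℝ)) * ∑ j, ‖g j‖ ^ 2) :=
  random_reshuffling_partial_sum_bound_general m d g hG ℓ
end

section
/- Under the assumptions: each f_i(·;ℓ) is L-smooth in the full variable, the pseudo-gradient at the Nash equilibrium satisfies Σ_ℓ ∇F_ℓ(x⋆) = 0, and x⋆^ℓ := P_Ω[x⋆ - α Σ_{p=0}^{ℓ-1} ∇F_{π(p)}(x⋆)] for a uniformly random permutation π, the shuffling variance σ²_{i,shuffle} := max_{ℓ} E[D_{f_{i,π(ℓ)}}(x_{i,⋆}^ℓ, x_{i,⋆})] satisfies σ²_{i,shuffle} ≤ (α² L m n / 4) σ⋆², where σ⋆² = (1/(mn)) Σ_{i=1}^n Σ_{ℓ=1}^m ‖∇f_i(x⋆;ℓ)‖². -/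
open scoped RealInnerProductSpace
open Finset Nat

/-!
Smoothness bounds the Bregman divergence by `(L/2)‖x⋆^ℓ - x⋆‖²`, and since `x⋆ ∈ Ω` the
projection does not increase the distance to `x⋆`, so the divergence is at most
`(L α²/2) ‖Σ_{p<ℓ} ∇F_{π(p)}(x⋆)‖²`. For a zero-sum sequence `a` of length `m`, symmetry makes
`E[a_{π p} a_{π q}]` the same for all `p ≠ q`, and the zero sum forces it to be `-1/(m-1)` times
`E[a_{π p}²] = (1/m) Σ a²`. Hence a prefix of `k` terms has second moment
`k(m-k)/(m(m-1)) · Σ a² ≤ (1/2) Σ a²`.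
-/

namespace Equiv.Perm

variable {α : Type*} [Fintype α] [DecidableEq α]

theorem card_nsmul_sum_apply {M : Type*} [AddCommMonoid M] (g : α → M) (p : α) :
    Fintype.card α • ∑ π : Perm α, g (π p) = (Fintype.card α)! • ∑ u, g u := by
  have h_indep : ∀ q, ∑ π : Perm α, g (π p) = ∑ π : Perm α, g (π q) := fun q => by
    simpa [mul_apply] using (Equiv.sum_comp (Equiv.mulRight (swap q p)) fun π => g (π p)).symm
  calc Fintype.card α • ∑ π : Perm α, g (π p)
      = ∑ q : α, ∑ π : Perm α, g (π q) := by
        rw [← Finset.card_univ, ← Finset.sum_const]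
        exact Finset.sum_congr rfl fun q _ => h_indep q
    _ = ∑ π : Perm α, ∑ u, g u := by
        rw [Finset.sum_comm]; exact Finset.sum_congr rfl fun π _ => Equiv.sum_comp π g
    _ = (Fintype.card α)! • ∑ u, g u := by
        rw [Finset.sum_const, Finset.card_univ, Fintype.card_perm]

variable {R : Type*} [CommRing R]

theorem card_sub_one_mul_sum_apply_mul_apply {a : α → R} (ha : ∑ u, a u = 0) {p q : α}
    (hpq : p ≠ q) :
    ((Fintype.card α : R) - 1) * ∑ π : Perm α, a (π p) * a (π q)
      = -∑ π : Perm α, a (π p) ^ 2 := by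
  have h_const : ∀ r ∈ univ.erase p,
      ∑ π : Perm α, a (π p) * a (π r) = ∑ π : Perm α, a (π p) * a (π q) := fun r hr => by
    have hrp := ne_of_mem_erase hr
    simpa [mul_apply, swap_apply_of_ne_of_ne hpq hrp.symm] using
      Equiv.sum_comp (Equiv.mulRight (swap q r)) fun π => a (π p) * a (π q)
  have h_row : ∑ r, ∑ π : Perm α, a (π p) * a (π r) = 0 := by
    rw [Finset.sum_comm]
    refine Finset.sum_eq_zero fun π _ => ?_
    rw [← Finset.mul_sum, Equiv.sum_comp π a, ha, mul_zero]
  rw [← Finset.add_sum_erase _ _ (mem_univ p), Finset.sum_congr rfl h_const, sum_const,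
    card_erase_of_mem (mem_univ p), Finset.card_univ, nsmul_eq_mul] at h_row
  have hcard : 1 ≤ Fintype.card α := Fintype.card_pos_iff.mpr ⟨p⟩
  push_cast [Nat.cast_sub hcard] at h_row
  simp only [sq]
  linear_combination h_row

theorem card_mul_sum_apply_sq (a : α → R) (p : α) :
    (Fintype.card α : R) * ∑ π : Perm α, a (π p) ^ 2 = (Fintype.card α)! * ∑ u, a u ^ 2 := by
  simpa only [nsmul_eq_mul] using card_nsmul_sum_apply (fun u => a u ^ 2) p

theorem card_mul_card_sub_one_mul_sum_sq_sum_apply {a : α → R} (ha : ∑ u, a u = 0)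
    (T : Finset α) :
    (Fintype.card α : R) * ((Fintype.card α : R) - 1) *
        ∑ π : Perm α, (∑ p ∈ T, a (π p)) ^ 2
      = #T * ((Fintype.card α : R) - #T) * (Fintype.card α)! * ∑ u, a u ^ 2 := by
  set m : R := (Fintype.card α : R)
  set D : R := (Fintype.card α)! * ∑ u, a u ^ 2 with hD
  have h_row : ∀ p ∈ T, ∑ q ∈ T, m * (m - 1) * ∑ π : Perm α, a (π p) * a (π q)
      = (m - #T) * D := fun p hp => by
    have h_diag : m * (m - 1) * ∑ π : Perm α, a (π p) * a (π p) = (m - 1) * D := by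
      simp only [← sq]
      linear_combination (m - 1) * card_mul_sum_apply_sq a p
    have h_off : ∀ q ∈ T.erase p, m * (m - 1) * ∑ π : Perm α, a (π p) * a (π q) = -D :=
      fun q hq => by
        rw [mul_assoc, card_sub_one_mul_sum_apply_mul_apply ha (ne_of_mem_erase hq).symm]
        linear_combination -card_mul_sum_apply_sq a p
    rw [← Finset.add_sum_erase _ _ hp, h_diag, Finset.sum_congr rfl h_off, sum_const,
      card_erase_of_mem hp, nsmul_eq_mul]
    push_cast [Nat.cast_sub (card_pos.mpr ⟨p, hp⟩ : 1 ≤ #T)]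
    ring
  calc m * (m - 1) * ∑ π : Perm α, (∑ p ∈ T, a (π p)) ^ 2
      = ∑ p ∈ T, ∑ q ∈ T, m * (m - 1) * ∑ π : Perm α, a (π p) * a (π q) := by
        simp_rw [sq, Finset.sum_mul_sum, Finset.mul_sum]
        rw [Finset.sum_comm]
        exact sum_congr rfl fun p _ => Finset.sum_comm
    _ = #T * (m - #T) * (Fintype.card α)! * ∑ u, a u ^ 2 := by
        rw [Finset.sum_congr rfl h_row, sum_const, nsmul_eq_mul, hD]; ring

theorem sum_sq_sum_apply_le {K : Type*} [Field K] [LinearOrder K] [IsStrictOrderedRing K]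
    {a : α → K} (ha : ∑ u, a u = 0) (T : Finset α) :
    ∑ π : Perm α, (∑ p ∈ T, a (π p)) ^ 2 ≤ (Fintype.card α)! / 2 * ∑ u, a u ^ 2 := by
  rcases le_or_gt (Fintype.card α) 1 with hcard | hcard
  · have : Subsingleton α := Fintype.card_le_one_iff_subsingleton.mp hcard
    have ha_zero : a = 0 :=
      funext fun u => by rw [← Fintype.sum_subsingleton a u, ha, Pi.zero_apply]
    simp [ha_zero]
  have hm : (2 : K) ≤ Fintype.card α := by exact_mod_cast hcard
  set m : K := (Fintype.card α : K)
  set k : K := (#T : K)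
  have h_coeff : 2 * (k * (m - k)) ≤ m * (m - 1) := by nlinarith [sq_nonneg (m - 2 * k)]
  have hS : 0 ≤ ((Fintype.card α)! : K) * ∑ u, a u ^ 2 := by positivity
  refine le_of_mul_le_mul_left ?_ (by nlinarith : 0 < m * (m - 1))
  rw [card_mul_card_sub_one_mul_sum_sq_sum_apply ha T]
  nlinarith [mul_le_mul_of_nonneg_right h_coeff hS]

end Equiv.Perm

theorem norm_sub_le_norm_sub_of_inner_sub_le_zero {F : Type*} [NormedAddCommGroup F]
    [InnerProductSpace ℝ F] {z y x : F} (h : ⟪z - y, x - y⟫ ≤ 0) : ‖y - x‖ ≤ ‖z - x‖ := by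
  have h_expand : ‖z - x‖ ^ 2 = ‖z - y‖ ^ 2 - 2 * ⟪z - y, x - y⟫ + ‖x - y‖ ^ 2 := by
    rw [← norm_sub_sq_real, sub_sub_sub_cancel_right]
  rw [← pow_le_pow_iff_left₀ (norm_nonneg _) (norm_nonneg _) two_ne_zero, norm_sub_rev y x,
    h_expand]
  nlinarith [sq_nonneg ‖z - y‖]

theorem shuffling_variance_bound_general
    (n m : ℕ) (α L : ℝ) (hL : 0 < L)
    (f : Fin n → Fin m → EuclideanSpace ℝ (Fin n) → ℝ)
    (gi : Fin n → Fin m → EuclideanSpace ℝ (Fin n) → ℝ)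
    (Ω : Set (EuclideanSpace ℝ (Fin n)))
    (P : EuclideanSpace ℝ (Fin n) → EuclideanSpace ℝ (Fin n))
    -- `P` is the Euclidean projection onto `Ω` (variational characterization)
    (hP : ∀ z, P z ∈ Ω ∧ ∀ w ∈ Ω, ⟪z - P z, w - P z⟫ ≤ 0)
    (xstar : EuclideanSpace ℝ (Fin n)) (hx : xstar ∈ Ω)
    -- each `f_i(·;ℓ)` is `L`-smooth in the full variable (Bregman upper bound)
    (hsmooth : ∀ i ℓ x y,
      f i ℓ x - f i ℓ y - gi i ℓ y * (x i - y i) ≤ L / 2 * ‖x - y‖ ^ 2)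
    -- the pseudo-gradient components vanish in total at the equilibrium
    (heq : ∀ i, ∑ ℓ, gi i ℓ xstar = 0) :
    ∀ i : Fin n, ∀ ℓ : Fin m,
      (1 / (Nat.factorial m : ℝ)) *
          ∑ π : Equiv.Perm (Fin m),
            (f i (π ℓ)
                (P (xstar - α • ((WithLp.equiv 2 (Fin n → ℝ)).symm
                    (fun i' => ∑ p ∈ Finset.univ.filter
                        (fun p : Fin m => (p : ℕ) < (ℓ : ℕ)),
                      gi i' (π p) xstar))))
              - f i (π ℓ) xstar
              - gi i (π ℓ) xstar *
                ((P (xstar - α • ((WithLp.equiv 2 (Fin n → ℝ)).symm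
                    (fun i' => ∑ p ∈ Finset.univ.filter
                        (fun p : Fin m => (p : ℕ) < (ℓ : ℕ)),
                      gi i' (π p) xstar)))) i - xstar i))
        ≤ α ^ 2 * L * (m : ℝ) * (n : ℝ) / 4 *
            ((1 / ((m : ℝ) * (n : ℝ))) * ∑ i', ∑ ℓ', (gi i' ℓ' xstar) ^ 2) := by
  intro i ℓ
  set T := Finset.univ.filter fun p : Fin m => (p : ℕ) < (ℓ : ℕ)
  set v : Equiv.Perm (Fin m) → EuclideanSpace ℝ (Fin n) := fun π =>
    (WithLp.equiv 2 (Fin n → ℝ)).symm fun i' => ∑ p ∈ T, gi i' (π p) xstar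
  have h_pointwise : ∀ π : Equiv.Perm (Fin m),
      f i (π ℓ) (P (xstar - α • v π)) - f i (π ℓ) xstar
          - gi i (π ℓ) xstar * (P (xstar - α • v π) i - xstar i)
        ≤ L / 2 * α ^ 2 * ∑ i', (∑ p ∈ T, gi i' (π p) xstar) ^ 2 := fun π => by
    have h_proj :=
      norm_sub_le_norm_sub_of_inner_sub_le_zero ((hP (xstar - α • v π)).2 xstar hx)
    have h_step : ‖xstar - α • v π - xstar‖ ^ 2
        = α ^ 2 * ∑ i', (∑ p ∈ T, gi i' (π p) xstar) ^ 2 := by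
      rw [sub_sub_cancel_left, norm_neg, norm_smul, mul_pow, Real.norm_eq_abs, sq_abs,
        EuclideanSpace.real_norm_sq_eq]
      rfl
    calc _ ≤ L / 2 * ‖P (xstar - α • v π) - xstar‖ ^ 2 := hsmooth _ _ _ _
      _ ≤ L / 2 * ‖xstar - α • v π - xstar‖ ^ 2 := by gcongr
      _ = _ := by rw [h_step]; ring
  have h_m : 0 < m := ℓ.pos
  have h_n : 0 < n := i.pos
  calc _ ≤ 1 / (m ! : ℝ) * ∑ π : Equiv.Perm (Fin m),
          L / 2 * α ^ 2 * ∑ i', (∑ p ∈ T, gi i' (π p) xstar) ^ 2 := by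
        gcongr with π; exact h_pointwise π
    _ = 1 / (m ! : ℝ) * (L / 2 * α ^ 2 * ∑ i', ∑ π : Equiv.Perm (Fin m),
          (∑ p ∈ T, gi i' (π p) xstar) ^ 2) := by rw [← Finset.mul_sum, Finset.sum_comm]
    _ ≤ 1 / (m ! : ℝ) * (L / 2 * α ^ 2 * ∑ i', (m ! : ℝ) / 2 * ∑ ℓ', gi i' ℓ' xstar ^ 2) := by
        gcongr with i'
        simpa using Equiv.Perm.sum_sq_sum_apply_le (heq i') T
    _ = _ := by rw [← Finset.mul_sum]; field_simp; ring

/-- shuffling-variance bound. With `n` players with scalar actions,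
`m` components per player, `L`-smooth components, a Nash equilibrium `x⋆ ∈ Ω`
whose pseudo-gradient components sum to zero, and reference points
`x⋆^ℓ = P_Ω[x⋆ - α Σ_{p<ℓ} ∇F_{π(p)}(x⋆)]`, the shuffling variance of player `i`
(`max_ℓ E[D_{f_{i,π(ℓ)}}(x⋆^ℓ, x⋆)]`, expectation over the uniformly random
permutation `π`) is bounded by `(α² L m n / 4) σ⋆²`. -/
theorem shuffling_variance_bound
    (n m : ℕ) (hn : 0 < n) (hm : 0 < m) (α L : ℝ) (hα : 0 < α) (hL : 0 < L)
    (f : Fin n → Fin m → EuclideanSpace ℝ (Fin n) → ℝ)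
    (gi : Fin n → Fin m → EuclideanSpace ℝ (Fin n) → ℝ)
    (Ω : Set (EuclideanSpace ℝ (Fin n)))
    (hΩconv : Convex ℝ Ω) (hΩcp : IsCompact Ω) (hΩne : Ω.Nonempty)
    (P : EuclideanSpace ℝ (Fin n) → EuclideanSpace ℝ (Fin n))
    -- `P` is the Euclidean projection onto `Ω` (variational characterization)
    (hP : ∀ z, P z ∈ Ω ∧ ∀ w ∈ Ω, ⟪z - P z, w - P z⟫ ≤ 0)
    (xstar : EuclideanSpace ℝ (Fin n)) (hx : xstar ∈ Ω)
    -- each `f_i(·;ℓ)` is `L`-smooth in the full variable (Bregman upper bound)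
    (hsmooth : ∀ i ℓ x y,
      f i ℓ x - f i ℓ y - gi i ℓ y * (x i - y i) ≤ L / 2 * ‖x - y‖ ^ 2)
    -- the pseudo-gradient components vanish in total at the equilibrium
    (heq : ∀ i, ∑ ℓ, gi i ℓ xstar = 0) :
    ∀ i : Fin n, ∀ ℓ : Fin m,
      (1 / (Nat.factorial m : ℝ)) *
          ∑ π : Equiv.Perm (Fin m),
            (f i (π ℓ)
                (P (xstar - α • ((WithLp.equiv 2 (Fin n → ℝ)).symm
                    (fun i' => ∑ p ∈ Finset.univ.filter
                        (fun p : Fin m => (p : ℕ) < (ℓ : ℕ)),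
                      gi i' (π p) xstar))))
              - f i (π ℓ) xstar
              - gi i (π ℓ) xstar *
                ((P (xstar - α • ((WithLp.equiv 2 (Fin n → ℝ)).symm
                    (fun i' => ∑ p ∈ Finset.univ.filter
                        (fun p : Fin m => (p : ℕ) < (ℓ : ℕ)),
                      gi i' (π p) xstar)))) i - xstar i))
        ≤ α ^ 2 * L * (m : ℝ) * (n : ℝ) / 4 *
            ((1 / ((m : ℝ) * (n : ℝ))) * ∑ i', ∑ ℓ', (gi i' ℓ' xstar) ^ 2) :=
  shuffling_variance_bound_general n m α L hL f gi Ω P hP xstar hx hsmooth heq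
end

section
/- Let (V_k) be a sequence of nonnegative random variables adapted to a filtration (F_k) with E[V_0] < ∞, satisfying E[V_{k+1} | F_k] ≤ (1 - u_k)V_k + β_k for all k ≥ 0, where 0 ≤ u_k ≤ 1, β_k ≥ 0, Σ u_k = ∞, Σ β_k < ∞, and β_k/u_k → 0. Then V_k → 0 almost surely and E[V_k] → 0. -/
/-!
Taking expectations, `e k = 𝔼[V k]` satisfies `e (k+1) ≤ (1 - u k) e k + β k`. Telescoping gives
`∑ u k e k < ∞`, and `e k + ∑_{j ≥ k} β j` is nonincreasing, so `e` converges; since `∑ u k = ∞`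
its limit is `0`. Pathwise, `V k + ∑_{j ≥ k} β j` is a nonnegative supermartingale, so it converges
almost surely, and so does `V k` because the tail sums vanish. The almost sure limit is `0`, since
`V k → 0` in `L¹` and some subsequence therefore tends to `0` almost surely.
-/

open MeasureTheory Filter Topology

theorem Summable.tsum_nat_add_eq_add {G : Type*} [AddCommGroup G] [TopologicalSpace G]
    [IsTopologicalAddGroup G] [T2Space G] {β : ℕ → G} (hβ : Summable β) (k : ℕ) :
    ∑' j, β (j + k) = β k + ∑' j, β (j + (k + 1)) := by
  rw [((summable_nat_add_iff k).2 hβ).tsum_eq_zero_add]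
  simp only [zero_add, add_right_comm _ 1 k, add_assoc]

section Deterministic

variable {a u β : ℕ → ℝ}

theorem exists_tendsto_of_le_add_of_summable (ha : ∀ k, 0 ≤ a k) (hβ0 : ∀ k, 0 ≤ β k)
    (hβ : Summable β) (hrec : ∀ k, a (k + 1) ≤ a k + β k) : ∃ L, Tendsto a atTop (𝓝 L) := by
  set w : ℕ → ℝ := fun k => a k + ∑' j, β (j + k)
  have hw_anti : Antitone w := antitone_nat_of_succ_le fun k => by
    simp only [w, hβ.tsum_nat_add_eq_add k]
    linarith [hrec k]
  have hw_nonneg : ∀ k, 0 ≤ w k := fun k => add_nonneg (ha k) (tsum_nonneg fun j => hβ0 _)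
  refine ⟨⨅ k, w k, ?_⟩
  simpa [w] using (tendsto_atTop_ciInf hw_anti ⟨0, by simpa [lowerBounds] using hw_nonneg⟩).sub
    (tendsto_sum_nat_add β)

theorem sum_range_mul_add_le (hrec : ∀ k, a (k + 1) ≤ (1 - u k) * a k + β k) (n : ℕ) :
    ∑ k ∈ Finset.range n, u k * a k + a n ≤ a 0 + ∑ k ∈ Finset.range n, β k := by
  induction n with
  | zero => simp
  | succ n ih =>
    simp only [Finset.sum_range_succ]
    linarith [hrec n]

theorem tendsto_zero_of_le_one_sub_mul_add (ha : ∀ k, 0 ≤ a k) (hu0 : ∀ k, 0 ≤ u k)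
    (hβ0 : ∀ k, 0 ≤ β k) (husum : Tendsto (fun n => ∑ k ∈ Finset.range n, u k) atTop atTop)
    (hβ : Summable β) (hrec : ∀ k, a (k + 1) ≤ (1 - u k) * a k + β k) :
    Tendsto a atTop (𝓝 0) := by
  obtain ⟨L, hL⟩ := exists_tendsto_of_le_add_of_summable ha hβ0 hβ fun k => by
    nlinarith [hrec k, ha k, hu0 k]
  have hua : Summable fun k => u k * a k :=
    summable_of_sum_range_le (c := a 0 + ∑' k, β k) (fun k => mul_nonneg (hu0 k) (ha k)) fun n => by
      linarith [sum_range_mul_add_le hrec n, ha n, hβ.sum_le_tsum (Finset.range n) fun k _ => hβ0 k]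
  suffices L = 0 by rwa [this] at hL
  by_contra hL0
  have hLpos : 0 < L := (ge_of_tendsto' hL ha).lt_of_ne' hL0
  -- Eventually `a k ≥ L / 2`, so `u` would be dominated by the summable `(2 / L) • u • a`.
  have hu : Summable u := by
    refine (hua.mul_left (2 / L)).of_norm_bounded_eventually_nat ?_
    filter_upwards [hL.eventually (eventually_ge_nhds (half_lt_self hLpos))] with k hk
    rw [Real.norm_of_nonneg (hu0 k), mul_comm (u k), ← mul_assoc]
    exact le_mul_of_one_le_left (hu0 k) (by rw [div_mul_eq_mul_div, le_div_iff₀ hLpos]; linarith)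
  exact (not_summable_iff_tendsto_nat_atTop_of_nonneg hu0).2 husum hu

end Deterministic

section Stochastic

variable {Ω : Type*} {m0 : MeasurableSpace Ω} {μ : Measure Ω}

theorem integral_le_of_condExp_le {m : MeasurableSpace Ω} (hm : m ≤ m0)
    [SigmaFinite (μ.trim hm)] {f g : Ω → ℝ} (hf : Integrable f μ) (h : μ[g | m] ≤ᵐ[μ] f) :
    ∫ ω, g ω ∂μ ≤ ∫ ω, f ω ∂μ := by
  rw [← integral_condExp hm]
  exact integral_mono_ae integrable_condExp hf h

theorem eLpNorm_one_eq_ofReal_integral {f : Ω → ℝ} (hf : Integrable f μ) (hnn : 0 ≤ᵐ[μ] f) :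
    eLpNorm f 1 μ = ENNReal.ofReal (∫ ω, f ω ∂μ) := by
  rw [eLpNorm_one_eq_lintegral_enorm, ofReal_integral_eq_lintegral_ofReal hf hnn]
  refine lintegral_congr_ae ?_
  filter_upwards [hnn] with ω hω
  exact Real.enorm_of_nonneg hω

theorem MeasureTheory.Supermartingale.exists_ae_tendsto_of_nonneg [IsFiniteMeasure μ]
    {ℱ : Filtration ℕ m0} {f : ℕ → Ω → ℝ} (hf : Supermartingale f ℱ μ)
    (hnn : ∀ n, 0 ≤ᵐ[μ] f n) : ∀ᵐ ω ∂μ, ∃ c, Tendsto (fun n => f n ω) atTop (𝓝 c) := by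
  have hbdd : ∀ n, eLpNorm ((-f) n) 1 μ ≤ (∫ ω, f 0 ω ∂μ).toNNReal := fun n => calc
    eLpNorm ((-f) n) 1 μ = ENNReal.ofReal (∫ ω, f n ω ∂μ) := by
      rw [Pi.neg_apply, eLpNorm_neg, eLpNorm_one_eq_ofReal_integral (hf.integrable n) (hnn n)]
    _ ≤ ENNReal.ofReal (∫ ω, f 0 ω ∂μ) := ENNReal.ofReal_le_ofReal <| by
      simpa using hf.setIntegral_le (Nat.zero_le n) MeasurableSet.univ
  filter_upwards [hf.neg.exists_ae_tendsto_of_bdd hbdd] with ω ⟨c, hc⟩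
  exact ⟨-c, by simpa using hc.neg⟩

theorem supermartingale_add_tsum_nat_add [IsFiniteMeasure μ] {ℱ : Filtration ℕ m0}
    {V : ℕ → Ω → ℝ} {β : ℕ → ℝ} (hadapted : Adapted ℱ V) (hint : ∀ k, Integrable (V k) μ)
    (hβ : Summable β) (hrec : ∀ k, ∀ᵐ ω ∂μ, μ[V (k + 1) | ℱ k] ω ≤ V k ω + β k) :
    Supermartingale (fun k ω => V k ω + ∑' j, β (j + k)) ℱ μ := by
  refine supermartingale_nat (fun k => ((hadapted k).add_const _).stronglyMeasurable)
    (fun k => (hint k).add (integrable_const _)) fun k => ?_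
  filter_upwards [condExp_add (hint (k + 1)) (integrable_const (∑' j, β (j + (k + 1)))) (ℱ k),
    hrec k] with ω hadd hω
  rw [hβ.tsum_nat_add_eq_add k]
  simp only [Pi.add_apply, condExp_const (ℱ.le k)] at hadd
  exact hadd.trans_le (by linarith)

theorem exists_ae_tendsto_of_condExp_le_add [IsFiniteMeasure μ] {ℱ : Filtration ℕ m0}
    {V : ℕ → Ω → ℝ} {β : ℕ → ℝ} (hadapted : Adapted ℱ V) (hint : ∀ k, Integrable (V k) μ)
    (hpos : ∀ k, ∀ᵐ ω ∂μ, 0 ≤ V k ω) (hβ0 : ∀ k, 0 ≤ β k) (hβ : Summable β)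
    (hrec : ∀ k, ∀ᵐ ω ∂μ, μ[V (k + 1) | ℱ k] ω ≤ V k ω + β k) :
    ∀ᵐ ω ∂μ, ∃ c, Tendsto (fun k => V k ω) atTop (𝓝 c) := by
  have hW := (supermartingale_add_tsum_nat_add hadapted hint hβ hrec).exists_ae_tendsto_of_nonneg
    fun k => by
      filter_upwards [hpos k] with ω hω
      exact add_nonneg hω (tsum_nonneg fun j => hβ0 _)
  filter_upwards [hW] with ω ⟨c, hc⟩
  exact ⟨c, by simpa using hc.sub (tendsto_sum_nat_add β)⟩

theorem ae_tendsto_zero_of_tendsto_integral {f : ℕ → Ω → ℝ} (hint : ∀ n, Integrable (f n) μ)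
    (hnn : ∀ n, 0 ≤ᵐ[μ] f n) (hlim : ∀ᵐ ω ∂μ, ∃ c, Tendsto (fun n => f n ω) atTop (𝓝 c))
    (hE : Tendsto (fun n => ∫ ω, f n ω ∂μ) atTop (𝓝 0)) :
    ∀ᵐ ω ∂μ, Tendsto (fun n => f n ω) atTop (𝓝 0) := by
  have hmeas : TendstoInMeasure μ f atTop 0 := by
    refine tendstoInMeasure_of_tendsto_eLpNorm_of_ne_top one_ne_zero ENNReal.one_ne_top
      (fun n => (hint n).aestronglyMeasurable) aestronglyMeasurable_zero ?_
    simp_rw [sub_zero, fun n => eLpNorm_one_eq_ofReal_integral (hint n) (hnn n)]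
    simpa using ENNReal.tendsto_ofReal hE
  obtain ⟨ns, hns, hsub⟩ := hmeas.exists_seq_tendsto_ae
  filter_upwards [hlim, hsub] with ω ⟨c, hc⟩ hω
  rwa [tendsto_nhds_unique (hc.comp hns.tendsto_atTop) hω, Pi.zero_apply] at hc

end Stochastic

theorem robbins_siegmund_polyak_general
    {α : Type*} {mα : MeasurableSpace α} {μ : Measure α} [IsProbabilityMeasure μ]
    (ℱ : Filtration ℕ mα)
    (V : ℕ → α → ℝ) (u β : ℕ → ℝ)
    (hadapted : Adapted ℱ V)
    (hint : ∀ k, Integrable (V k) μ)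
    (hpos : ∀ k, ∀ᵐ ω ∂μ, 0 ≤ V k ω)
    (hu0 : ∀ k, 0 ≤ u k) (hβ0 : ∀ k, 0 ≤ β k)
    (husum : Tendsto (fun n => ∑ k ∈ Finset.range n, u k) atTop atTop)
    (hβsum : Summable β)
    (hrec : ∀ k, ∀ᵐ ω ∂μ, (μ[V (k + 1) | ℱ k]) ω ≤ (1 - u k) * V k ω + β k) :
    (∀ᵐ ω ∂μ, Tendsto (fun k => V k ω) atTop (nhds 0)) ∧
      Tendsto (fun k => ∫ ω, V k ω ∂μ) atTop (nhds 0) := by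
  have hE : ∀ k, ∫ ω, V (k + 1) ω ∂μ ≤ (1 - u k) * ∫ ω, V k ω ∂μ + β k := fun k => by
    have h := integral_le_of_condExp_le (f := fun ω => (1 - u k) * V k ω + β k) (ℱ.le k)
      (((hint k).const_mul _).add (integrable_const _)) (hrec k)
    rwa [integral_add ((hint k).const_mul _) (integrable_const _), integral_const_mul,
      integral_const, probReal_univ, one_smul] at h
  have hE0 : Tendsto (fun k => ∫ ω, V k ω ∂μ) atTop (𝓝 0) :=
    tendsto_zero_of_le_one_sub_mul_add (fun k => integral_nonneg_of_ae (hpos k)) hu0 hβ0 husum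
      hβsum hE
  have hconv := exists_ae_tendsto_of_condExp_le_add hadapted hint hpos hβ0 hβsum fun k => by
    filter_upwards [hrec k, hpos k] with ω hω hVω
    nlinarith [hu0 k]
  exact ⟨ae_tendsto_zero_of_tendsto_integral hint hpos hconv hE0, hE0⟩

/-- Robbins–Siegmund-type lemma (Polyak, Lemma 10, p. 49).
If nonnegative adapted `V_k` satisfy
`E[V_{k+1} | F_k] ≤ (1-u_k) V_k + β_k` with deterministic `0 ≤ u_k ≤ 1`,
`β_k ≥ 0`, `Σ u_k = ∞`, `Σ β_k < ∞` and `β_k / u_k → 0`, then `V_k → 0`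
almost surely and `E[V_k] → 0`. -/
theorem robbins_siegmund_polyak
    {α : Type*} {mα : MeasurableSpace α} {μ : Measure α} [IsProbabilityMeasure μ]
    (ℱ : Filtration ℕ mα)
    (V : ℕ → α → ℝ) (u β : ℕ → ℝ)
    (hadapted : Adapted ℱ V)
    (hint : ∀ k, Integrable (V k) μ)
    (hpos : ∀ k, ∀ᵐ ω ∂μ, 0 ≤ V k ω)
    (hu0 : ∀ k, 0 ≤ u k) (hu1 : ∀ k, u k ≤ 1) (hβ0 : ∀ k, 0 ≤ β k)
    (husum : Tendsto (fun n => ∑ k ∈ Finset.range n, u k) atTop atTop)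
    (hβsum : Summable β)
    (hratio : Tendsto (fun k => β k / u k) atTop (nhds 0))
    (hrec : ∀ k, ∀ᵐ ω ∂μ, (μ[V (k + 1) | ℱ k]) ω ≤ (1 - u k) * V k ω + β k) :
    (∀ᵐ ω ∂μ, Tendsto (fun k => V k ω) atTop (nhds 0)) ∧
      Tendsto (fun k => ∫ ω, V k ω ∂μ) atTop (nhds 0) :=
  robbins_siegmund_polyak_general ℱ V u β hadapted hint hpos hu0 hβ0 husum hβsum hrec
end
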